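/- Let H be a commutative monoid with group of units H^×. Then 𝒫fin,1(H) is UmF if and only if all of the following hold: (1) the set H ∖ H^× of non-units is closed under multiplication and is a breakable semigroup; (2) H^× has at most 2 elements; (3) uy = y for every u ∈ H^× and every y ∈ H ∖ H^× (i.e. H is the trivial ideal extension of H ∖ H^× by H^×). -/

import Mathlib

/-! The conditions on `H` amount to `a * b ∈ {1, a, b}` for all `a, b`, which in turn is
equivalent to `X * Y = X ∪ Y` in `𝒫fin,1(H)`. In that case `𝒫fin,1(H)` is the free semilattice on
`H ∖ {1}`: the irreducibles are the pairs `{1, a}`, and the minimal factorizations of `X` are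
the repetition-free enumerations of the pairs `{1, a}` with `a ∈ X ∖ {1}`.

Conversely, if some `a * b ∉ {1, a, b}`, an element with two minimal factorizations that are not
permutations of each other is written down: `{1, a} * {1, a²}` against `{1, a}²` or `{1, a}³`
when `a² ∉ {1, a}`; `{1, u} * {1, b} = {1, u} * {1, u * b}` when `u² = 1`; and
`{1, a} * {1, b} = {1, a, b} * {1, a}` when `a` and `b` are idempotent. -/

open scoped Pointwise

section Defs

variable {M : Type*} [Monoid M]

/-- `x` divides `y` (two-sidedly) in a monoid: `y = u * x * v` for some `u v`. -/
def dvdTS (x y : M) : Prop := ∃ u v : M, y = u * x * v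

/-- A non-unit-divisor: an element that does not divide `1`. -/
def isNonUnitDivisor (x : M) : Prop := ¬ dvdTS x 1

/-- `x` properly divides `y`: `x` divides `y` but `y` does not divide `x`. -/
def properDvdTS (x y : M) : Prop := dvdTS x y ∧ ¬ dvdTS y x

/-- An irreducible: a non-unit-divisor `a` with `a ≠ x * y` whenever `x, y` are
non-unit-divisors properly dividing `a`. -/
def isIrred (a : M) : Prop :=
  isNonUnitDivisor a ∧
    ∀ x y : M, isNonUnitDivisor x → isNonUnitDivisor y →
      properDvdTS x a → properDvdTS y a → a ≠ x * y

/-- An atom: a non-unit-divisor that is not a product of two non-unit-divisors. -/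
def isAtomTS (a : M) : Prop :=
  isNonUnitDivisor a ∧ ∀ x y : M, isNonUnitDivisor x → isNonUnitDivisor y → a ≠ x * y

/-- A quark: a non-unit-divisor not properly divided by any non-unit-divisor. -/
def isQuarkTS (a : M) : Prop :=
  isNonUnitDivisor a ∧ ∀ x : M, isNonUnitDivisor x → ¬ properDvdTS x a

/-- A factorization of `x` into irreducibles, recorded as a list. -/
def IsFactorization (l : List M) (x : M) : Prop :=
  (∀ a ∈ l, isIrred a) ∧ l.prod = x

/-- A minimal factorization: a factorization of `x` such that no product, in any order,
of a proper sub-multiset of its factors equals `x`. -/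
def IsMinimalFactorization (l : List M) (x : M) : Prop :=
  IsFactorization l x ∧
    ∀ l' : List M, (↑l' : Multiset M) < (↑l : Multiset M) → l'.prod ≠ x

end Defs

/-- A unique minimal factorization (UmF) monoid: every non-identity element has a minimal
factorization into irreducibles, unique up to permutation of the factors. -/
def IsUmF (M : Type*) [Monoid M] : Prop :=
  (∀ x : M, x ≠ 1 → ∃ l : List M, IsMinimalFactorization l x) ∧
    ∀ x : M, ∀ l l' : List M,
      IsMinimalFactorization l x → IsMinimalFactorization l' x → l.Perm l'

/-- The reduced finitary power monoid `𝒫fin,1(H)` of a monoid `H`: the submonoid of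
`Finset H` (under pointwise multiplication) of finite subsets containing `1`. -/
def redPow (H : Type*) [Monoid H] [DecidableEq H] : Submonoid (Finset H) where
  carrier := {X : Finset H | (1 : H) ∈ X}
  one_mem' := by simp
  mul_mem' := by
    intro X Y hX hY
    simpa using Finset.mul_mem_mul hX hY

section Monoid

variable {M : Type*} [Monoid M]

lemma isNonUnitDivisor.mul_ne_one {A : M} (hA : isNonUnitDivisor A) (B : M) : A * B ≠ 1 :=
  fun h => hA ⟨1, B, by rw [one_mul, h]⟩

lemma isMinimalFactorization_pair {A B : M} (hA : isIrred A) (hB : isIrred B)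
    (hAB : A ≠ A * B) (hBA : B ≠ A * B) : IsMinimalFactorization [A, B] (A * B) := by
  refine ⟨⟨by simp [hA, hB], by simp⟩, fun l hl hprod => ?_⟩
  have hlen : l.length < 2 := by simpa using Multiset.card_lt_card hl
  have hmem : ∀ x ∈ l, x = A ∨ x = B := fun x hx => by
    simpa using Multiset.mem_of_le hl.le (Multiset.mem_coe.2 hx)
  match l, hlen with
  | [], _ => exact hA.1.mul_ne_one B (by simpa using hprod.symm)
  | [x], _ => rcases hmem x (by simp) with rfl | rfl <;> simp_all

lemma isMinimalFactorization_triple {A : M} (hA : isIrred A)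
    (h₁ : A ≠ A * A * A) (h₂ : A * A ≠ A * A * A) :
    IsMinimalFactorization [A, A, A] (A * A * A) := by
  refine ⟨⟨by simp [hA], by simp [mul_assoc]⟩, fun l hl hprod => ?_⟩
  have hlen : l.length < 3 := by simpa using Multiset.card_lt_card hl
  have hmem : ∀ x ∈ l, x = A := fun x hx => by
    simpa using Multiset.mem_of_le hl.le (Multiset.mem_coe.2 hx)
  match l, hlen with
  | [], _ => exact hA.1.mul_ne_one (A * A) (by simpa [mul_assoc] using hprod.symm)
  | [x], _ => obtain rfl := hmem x (by simp); simp_all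
  | [x, y], _ =>
    obtain rfl := hmem x (by simp)
    obtain rfl := hmem y (by simp)
    simp_all

end Monoid

lemma Set.encard_le_two_iff_subsingleton_diff {α : Type*} {s : Set α} {a : α} (ha : a ∈ s) :
    s.encard ≤ 2 ↔ (s \ {a}).Subsingleton := by
  rw [← Set.encard_sdiff_singleton_add_one ha, ← Set.encard_le_one_iff_subsingleton]
  exact ENat.add_le_add_iff_right ENat.one_ne_top (m := 1)

lemma encard_setOf_isUnit_le_two_iff {H : Type*} [Monoid H] :
    {u : H | IsUnit u}.encard ≤ 2 ↔ ∀ u v : H, IsUnit u → IsUnit v → u ≠ 1 → v ≠ 1 → u = v := by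
  rw [Set.encard_le_two_iff_subsingleton_diff (s := {u : H | IsUnit u}) isUnit_one]
  simp only [Set.Subsingleton, Set.mem_sdiff, Set.mem_ofPred_eq, Set.mem_singleton_iff]
  exact ⟨fun h u v hu hv hu1 hv1 => h ⟨hu, hu1⟩ ⟨hv, hv1⟩,
    fun h u hu v hv => h u v hu.1 hv.1 hu.2 hv.2⟩

lemma forall_mul_mem_iff {H : Type*} [CommMonoid H] :
    (∀ a b : H, a * b ∈ ({1, a, b} : Set H)) ↔
      (∀ x y : H, ¬ IsUnit x → ¬ IsUnit y → ¬ IsUnit (x * y)) ∧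
      (∀ x y : H, ¬ IsUnit x → ¬ IsUnit y → x * y = x ∨ x * y = y) ∧
      Set.encard {u : H | IsUnit u} ≤ 2 ∧
      (∀ u y : H, IsUnit u → ¬ IsUnit y → u * y = y) := by
  simp only [Set.mem_insert_iff, Set.mem_singleton_iff, encard_setOf_isUnit_le_two_iff]
  constructor
  · intro h
    have hunit {u : H} (hu : IsUnit u) {y : H} (hy : u * y = u) : y = 1 :=
      hu.mul_left_cancel (hy.trans (mul_one u).symm)
    refine ⟨fun x y hx _ hxy => hx (isUnit_of_mul_isUnit_left hxy),
      fun x y hx _ => (h x y).resolve_left fun hxy => hx (IsUnit.of_mul_eq_one y hxy),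
      fun u v hu hv hu1 hv1 => ?_, fun u y hu hy => ?_⟩
    · have huu : u * u = 1 := by
        rcases h u u with huu | huu | huu
        exacts [huu, absurd (hunit hu huu) hu1, absurd (hunit hu huu) hu1]
      rcases h u v with huv | huv | huv
      · exact hu.mul_left_cancel (huu.trans huv.symm)
      · exact absurd (hunit hu huv) hv1
      · exact absurd (hunit hv (mul_comm u v ▸ huv)) hu1
    · rcases h u y with huy | huy | huy
      · exact absurd (IsUnit.of_mul_eq_one_right u huy) hy
      · exact absurd (hunit hu huy ▸ isUnit_one) hy
      · exact huy
  · rintro ⟨-, hbrk, hunits, hact⟩ a b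
    by_cases ha : IsUnit a <;> by_cases hb : IsUnit b
    · by_cases ha1 : a = 1
      · simp [ha1]
      by_cases hb1 : b = 1
      · simp [hb1]
      obtain rfl := hunits a b ha hb ha1 hb1
      refine Or.inl (by_contra fun haa => ha1 (ha.mul_left_cancel ?_))
      rw [hunits _ _ (ha.mul ha) ha haa ha1, mul_one]
    · exact Or.inr (Or.inr (hact a b ha hb))
    · exact Or.inr (Or.inl (mul_comm a b ▸ hact b a hb ha))
    · exact Or.inr (hbrk a b ha hb)

namespace redPow

variable {H : Type*} [CommMonoid H] [DecidableEq H]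

lemma one_mem_coe (X : redPow H) : (1 : H) ∈ (X : Finset H) := X.2

lemma ne_of_notMem_of_mem {X Y : redPow H} {x : H} (hX : x ∉ (X : Finset H))
    (hY : x ∈ (Y : Finset H)) : X ≠ Y :=
  fun h => hX (h ▸ hY)

lemma subset_of_dvdTS {X Y : redPow H} (h : dvdTS X Y) : (X : Finset H) ⊆ Y := by
  obtain ⟨U, V, rfl⟩ := h
  intro x hx
  simpa using Finset.mul_mem_mul (Finset.mul_mem_mul (one_mem_coe U) hx) (one_mem_coe V)

lemma isNonUnitDivisor_iff {X : redPow H} : isNonUnitDivisor X ↔ (X : Finset H) ≠ {1} := by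
  refine ⟨fun h hX => h ⟨1, 1, ?_⟩, fun h hX => h ?_⟩
  · simpa using (Subtype.ext hX : X = 1).symm
  · exact (subset_of_dvdTS hX).antisymm (Finset.singleton_subset_iff.2 (one_mem_coe X))

lemma exists_mem_ne_one {X : redPow H} (hX : isNonUnitDivisor X) :
    ∃ x ∈ (X : Finset H), x ≠ 1 := by
  by_contra! h
  exact isNonUnitDivisor_iff.1 hX
    (Finset.subset_singleton_iff'.2 h |>.antisymm (Finset.singleton_subset_iff.2 (one_mem_coe X)))

def pair (a : H) : redPow H := ⟨{1, a}, Finset.mem_insert_self 1 {a}⟩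

@[simp]
lemma coe_pair (a : H) : (pair a : Finset H) = {1, a} := rfl

lemma coe_pair_mul_pair (a b : H) :
    ((pair a * pair b : redPow H) : Finset H) = {1, a, b, a * b} := by
  ext x
  simp only [Submonoid.coe_mul, coe_pair, Finset.mem_mul, Finset.mem_insert, Finset.mem_singleton,
    exists_eq_or_imp, exists_eq_left, one_mul, mul_one]
  tauto

lemma isIrred_pair {a : H} (ha : a ≠ 1) : isIrred (pair a) := by
  have hnu : isNonUnitDivisor (pair a) := isNonUnitDivisor_iff.2 fun h => by
    have : a ∈ (pair a : Finset H) := by simp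
    rw [h, Finset.mem_singleton] at this
    exact ha this
  refine ⟨hnu, fun Y _ hY _ hYa _ _ => hYa.2 ⟨1, 1, ?_⟩⟩
  obtain ⟨y, hyY, hy1⟩ := exists_mem_ne_one hY
  have hya : y = a := by simpa [hy1] using subset_of_dvdTS hYa.1 hyY
  subst hya
  have : (Y : Finset H) = {1, y} :=
    (subset_of_dvdTS hYa.1).antisymm (Finset.insert_subset (one_mem_coe Y) (by simpa using hyY))
  simpa using (Subtype.ext this : Y = pair y)

lemma isIrred_of_coe_eq_triple {D : redPow H} {a b : H} (ha : IsIdempotentElem a)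
    (hb : IsIdempotentElem b) (hab : a * b ∉ ({1, a, b} : Finset H))
    (hD : (D : Finset H) = {1, a, b}) : isIrred D := by
  have hmem : ∀ {x}, x ∈ (D : Finset H) ↔ x = 1 ∨ x = a ∨ x = b := by simp [hD]
  have ha1 : a ≠ 1 := by rintro rfl; simp at hab
  have hb1 : b ≠ 1 := by rintro rfl; simp at hab
  have hne : a ≠ b := by rintro rfl; simp [ha.eq] at hab
  refine ⟨isNonUnitDivisor_iff.2 fun h => ha1 (by simpa [h] using hmem.2 (Or.inr (Or.inl rfl))),
    fun Y Z hY hZ hYD hZD hDYZ => ?_⟩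
  have hYD := subset_of_dvdTS hYD.1
  have hZD := subset_of_dvdTS hZD.1
  have hD_mul : (D : Finset H) = Y * Z := by rw [hDYZ, Submonoid.coe_mul]
  -- `y * z ∈ D` while `a * b ∉ D`, so the nontrivial elements of `Y` and `Z` all coincide
  have key : ∀ y ∈ (Y : Finset H), ∀ z ∈ (Z : Finset H), y ≠ 1 → z ≠ 1 → y = z := by
    intro y hy z hz hy1 hz1
    have hyz : y * z ∈ ({1, a, b} : Finset H) := hD ▸ hD_mul ▸ Finset.mul_mem_mul hy hz
    have hy' : y = a ∨ y = b := by simpa [hy1] using hmem.1 (hYD hy)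
    have hz' : z = a ∨ z = b := by simpa [hz1] using hmem.1 (hZD hz)
    rcases hy' with rfl | rfl <;> rcases hz' with rfl | rfl
    exacts [rfl, absurd hyz hab, absurd (mul_comm y z ▸ hyz) hab, rfl]
  obtain ⟨y, hyY, hy1⟩ := exists_mem_ne_one hY
  obtain ⟨z, hzZ, hz1⟩ := exists_mem_ne_one hZ
  obtain rfl := key y hyY z hzZ hy1 hz1
  have hyy : y * y = y := by
    rcases hmem.1 (hYD hyY) with rfl | rfl | rfl <;> simp_all [ha.eq, hb.eq]
  have hY' : (Y : Finset H) ⊆ {1, y} := fun x hx => by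
    rcases eq_or_ne x 1 with rfl | hx1
    exacts [by simp, by simp [key x hx y hzZ hx1 hy1]]
  have hZ' : (Z : Finset H) ⊆ {1, y} := fun x hx => by
    rcases eq_or_ne x 1 with rfl | hx1
    exacts [by simp, by simp [(key y hyY x hx hy1 hx1).symm]]
  have hDy : (D : Finset H) ⊆ {1, y} := by
    rw [hD_mul]
    refine (Finset.mul_subset_mul hY' hZ').trans ?_
    rw [← coe_pair, ← Submonoid.coe_mul, coe_pair_mul_pair, hyy]
    simp
  have h_eq {x : H} (hx : x = a ∨ x = b) (hx1 : x ≠ 1) : x = y := by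
    simpa [hx1] using hDy (hmem.2 (Or.inr hx))
  exact hne ((h_eq (Or.inl rfl) ha1).trans (h_eq (Or.inr rfl) hb1).symm)

lemma mul_self_mem_of_isUmF (h : IsUmF (redPow H)) (a : H) : a * a ∈ ({1, a} : Set H) := by
  by_contra haa
  simp only [Set.mem_insert_iff, Set.mem_singleton_iff, not_or] at haa
  obtain ⟨haa1, haa⟩ := haa
  have ha1 : a ≠ 1 := by rintro rfl; simp at haa1
  have hAB : ((pair a * pair (a * a) : redPow H) : Finset H) = {1, a, a * a, a * (a * a)} :=
    coe_pair_mul_pair _ _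
  have hA : pair a ≠ pair a * pair (a * a) :=
    ne_of_notMem_of_mem (x := a * a) (by simp [haa1, haa]) (by simp [hAB])
  have hB : pair (a * a) ≠ pair a * pair (a * a) :=
    ne_of_notMem_of_mem (x := a) (by simp [ha1, Ne.symm haa]) (by simp [hAB])
  have hfac := isMinimalFactorization_pair (isIrred_pair ha1) (isIrred_pair haa1) hA hB
  by_cases ha3 : a * (a * a) ∈ ({1, a, a * a} : Finset H)
  · -- `{1, a} * {1, a} = {1, a} * {1, a * a}`
    have hAA : pair a * pair a = pair a * pair (a * a) := by
      refine Subtype.ext ?_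
      rw [hAB, coe_pair_mul_pair]
      simp only [Finset.mem_insert, Finset.mem_singleton] at ha3
      ext x
      simp only [Finset.mem_insert, Finset.mem_singleton]
      grind
    have hperm := h.2 _ _ _ hfac
      (hAA ▸ isMinimalFactorization_pair (isIrred_pair ha1) (isIrred_pair ha1)
        (hAA ▸ hA) (hAA ▸ hA))
    have hpair : pair (a * a) = pair a := by simpa using hperm.subset (by simp)
    have : a * a ∈ (pair a : Finset H) := hpair ▸ (by simp)
    simp [haa1, haa] at this
  · -- `{1, a}³ = {1, a} * {1, a * a}`: minimal factorizations of different lengths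
    have hAAA : pair a * pair a * pair a = pair a * pair (a * a) := by
      refine Subtype.ext ?_
      rw [hAB, Submonoid.coe_mul, coe_pair_mul_pair, coe_pair]
      ext x
      simp only [Finset.mem_mul, Finset.mem_insert, Finset.mem_singleton,
        exists_eq_or_imp, exists_eq_left, one_mul, mul_one]
      grind
    have hAA : a * (a * a) ∉ ((pair a * pair a : redPow H) : Finset H) := by
      rw [coe_pair_mul_pair]; simpa using ha3
    have h₂ : pair a * pair a ≠ pair a * pair a * pair a :=
      ne_of_notMem_of_mem hAA (by simp [hAAA, hAB])
    have hperm := h.2 _ _ _ hfac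
      (hAAA ▸ isMinimalFactorization_triple (isIrred_pair ha1) (hAAA ▸ hA) h₂)
    simpa using hperm.length_eq

lemma mul_mem_of_isUmF_of_mul_self_eq_one (h : IsUmF (redPow H)) {u : H} (hu : u * u = 1)
    (b : H) : u * b ∈ ({1, u, b} : Set H) := by
  by_contra hub
  simp only [Set.mem_insert_iff, Set.mem_singleton_iff, not_or] at hub
  obtain ⟨hub1, hubu, hubb⟩ := hub
  have hu1 : u ≠ 1 := by rintro rfl; simp at hubb
  have hb1 : b ≠ 1 := by rintro rfl; simp at hubu
  have hbu : b ≠ u := by rintro rfl; exact hub1 hu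
  have hAB := coe_pair_mul_pair u b
  -- `u * (u * b) = b`, so `{1, u} * {1, b} = {1, u} * {1, u * b}`
  have hAC : pair u * pair (u * b) = pair u * pair b := by
    refine Subtype.ext ?_
    rw [hAB, coe_pair_mul_pair, ← mul_assoc, hu, one_mul]
    ext x
    simp only [Finset.mem_insert, Finset.mem_singleton]
    tauto
  have hA : pair u ≠ pair u * pair b :=
    ne_of_notMem_of_mem (x := b) (by simp [hb1, hbu]) (by simp [hAB])
  have hperm := h.2 _ _ _
    (isMinimalFactorization_pair (isIrred_pair hu1) (isIrred_pair hb1) hA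
      (ne_of_notMem_of_mem (x := u) (by simp [hu1, hbu.symm]) (by simp [hAB])))
    (hAC ▸ isMinimalFactorization_pair (isIrred_pair hu1) (isIrred_pair hub1) (hAC ▸ hA)
      (hAC ▸ ne_of_notMem_of_mem (x := u) (by simp [hu1, Ne.symm hubu]) (by simp [hAB])))
  have hB : pair b = pair u ∨ pair b = pair (u * b) := by simpa using hperm.subset (by simp)
  have : b ∈ (pair u : Finset H) ∨ b ∈ (pair (u * b) : Finset H) := by
    rcases hB with hB | hB
    · left; rw [← hB]; simp
    · right; rw [← hB]; simp
  simp [hb1, hbu, Ne.symm hubb] at this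

lemma mul_mem_of_isUmF_of_isIdempotentElem (h : IsUmF (redPow H)) {a b : H}
    (ha : IsIdempotentElem a) (hb : IsIdempotentElem b) : a * b ∈ ({1, a, b} : Set H) := by
  by_contra hab
  have hab' : a * b ∉ ({1, a, b} : Finset H) := by simpa using hab
  simp only [Set.mem_insert_iff, Set.mem_singleton_iff, not_or] at hab
  obtain ⟨hab1, haba, habb⟩ := hab
  have ha1 : a ≠ 1 := by rintro rfl; simp at habb
  have hb1 : b ≠ 1 := by rintro rfl; simp at haba
  have hne : a ≠ b := by rintro rfl; exact haba ha.eq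
  let D : redPow H := ⟨{1, a, b}, Finset.mem_insert_self 1 {a, b}⟩
  have hAB := coe_pair_mul_pair a b
  -- `{1, a, b} * {1, a} = {1, a} * {1, b}`, as `a * a = a`
  have hDA : D * pair a = pair a * pair b := by
    refine Subtype.ext ?_
    rw [hAB, Submonoid.coe_mul, coe_pair]
    ext x
    simp only [D, Finset.mem_mul, Finset.mem_insert, Finset.mem_singleton,
      exists_eq_or_imp, exists_eq_left, one_mul, mul_one, ha.eq, mul_comm b a]
    tauto
  have hA : pair a ≠ pair a * pair b :=
    ne_of_notMem_of_mem (x := b) (by simp [hb1, hne.symm]) (by simp [hAB])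
  have hperm := h.2 _ _ _
    (isMinimalFactorization_pair (isIrred_pair ha1) (isIrred_pair hb1) hA
      (ne_of_notMem_of_mem (x := a) (by simp [ha1, hne]) (by simp [hAB])))
    (hDA ▸ isMinimalFactorization_pair (isIrred_of_coe_eq_triple ha hb hab' rfl)
      (isIrred_pair ha1)
      (by rw [hDA]; exact ne_of_notMem_of_mem (x := a * b) hab' (by simp [hAB])) (hDA ▸ hA))
  have hD : D = pair a ∨ D = pair b := by
    simpa using hperm.symm.subset (by simp : D ∈ [D, pair a])
  have : b ∈ (pair a : Finset H) ∨ a ∈ (pair b : Finset H) := by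
    rcases hD with hD | hD
    · left; rw [← hD]; simp [D]
    · right; rw [← hD]; simp [D]
  simp [ha1, hb1, hne, hne.symm] at this

lemma mul_mem_of_isUmF (h : IsUmF (redPow H)) (a b : H) : a * b ∈ ({1, a, b} : Set H) := by
  have hsq (x : H) : x * x = 1 ∨ IsIdempotentElem x := by
    simpa [IsIdempotentElem] using mul_self_mem_of_isUmF h x
  rcases hsq a with ha | ha
  · exact mul_mem_of_isUmF_of_mul_self_eq_one h ha b
  rcases hsq b with hb | hb
  · have := mul_mem_of_isUmF_of_mul_self_eq_one h hb a
    simp only [Set.mem_insert_iff, Set.mem_singleton_iff] at this ⊢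
    rw [mul_comm]; tauto
  exact mul_mem_of_isUmF_of_isIdempotentElem h ha hb

section UnionMul

variable
  (hU : ∀ X Y : redPow H, ((X * Y : redPow H) : Finset H) = (X : Finset H) ∪ (Y : Finset H))
include hU

lemma dvdTS_iff_subset {X Y : redPow H} : dvdTS X Y ↔ (X : Finset H) ⊆ Y :=
  ⟨subset_of_dvdTS, fun h => ⟨Y, Y, Subtype.ext (by rw [hU, hU, Finset.union_eq_left.2 h,
    Finset.union_self])⟩⟩

lemma properDvdTS_iff_ssubset {X Y : redPow H} : properDvdTS X Y ↔ (X : Finset H) ⊂ Y := by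
  rw [properDvdTS, dvdTS_iff_subset hU, dvdTS_iff_subset hU, Finset.ssubset_def]

lemma mem_coe_list_prod (l : List (redPow H)) (x : H) :
    x ∈ (l.prod : Finset H) ↔ x = 1 ∨ ∃ B ∈ l, x ∈ (B : Finset H) := by
  induction l with
  | nil => simp
  | cons B l ih =>
    rw [List.prod_cons, hU, Finset.mem_union, ih]
    simp only [List.mem_cons, exists_eq_or_imp]
    tauto

lemma exists_eq_pair_of_isIrred {A : redPow H} (hA : isIrred A) : ∃ a ≠ 1, A = pair a := by
  obtain ⟨a, haA, ha1⟩ := exists_mem_ne_one hA.1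
  refine ⟨a, ha1, Subtype.ext ?_⟩
  refine (Finset.insert_subset (one_mem_coe A) (by simpa using haA)).antisymm' fun b hbA => ?_
  by_contra hb
  simp only [Finset.mem_insert, Finset.mem_singleton, not_or] at hb
  -- otherwise `A = (A \ {b}) ∪ {1, b}` with both factors proper
  let Y : redPow H := ⟨(A : Finset H).erase b, Finset.mem_erase.2 ⟨Ne.symm hb.1, one_mem_coe A⟩⟩
  have haY : a ∈ (Y : Finset H) := Finset.mem_erase.2 ⟨Ne.symm hb.2, haA⟩
  refine hA.2 Y (pair b) (isNonUnitDivisor_iff.2 fun h => ha1 (by simpa [h] using haY))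
    (isIrred_pair hb.1).1 ((properDvdTS_iff_ssubset hU).2 (Finset.erase_ssubset hbA))
    ((properDvdTS_iff_ssubset hU).2 ?_) (Subtype.ext ?_)
  · refine Finset.ssubset_iff_subset_ne.2
      ⟨Finset.insert_subset (one_mem_coe A) (by simpa using hbA), fun h => ?_⟩
    have : a ∈ (pair b : Finset H) := h ▸ haA
    simp [ha1, Ne.symm hb.2] at this
  · rw [hU]
    ext z
    simp only [Y, coe_pair, Finset.mem_union, Finset.mem_erase, Finset.mem_insert,
      Finset.mem_singleton]
    constructor
    · intro hz
      by_cases hzb : z = b <;> tauto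
    · rintro (⟨-, hz⟩ | rfl | rfl)
      exacts [hz, one_mem_coe A, hbA]

lemma toFinset_eq_of_isFactorization {l : List (redPow H)} {X : redPow H}
    (hl : IsFactorization l X) : l.toFinset = ((X : Finset H).erase 1).image pair := by
  ext B
  simp only [List.mem_toFinset, Finset.mem_image, Finset.mem_erase]
  constructor
  · intro hB
    obtain ⟨a, ha1, rfl⟩ := exists_eq_pair_of_isIrred hU (hl.1 B hB)
    refine ⟨a, ⟨ha1, ?_⟩, rfl⟩
    rw [← hl.2, mem_coe_list_prod hU]
    exact Or.inr ⟨_, hB, by simp⟩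
  · rintro ⟨a, ⟨ha1, haX⟩, rfl⟩
    rw [← hl.2, mem_coe_list_prod hU] at haX
    obtain ⟨C, hC, haC⟩ := haX.resolve_left ha1
    obtain ⟨c, -, rfl⟩ := exists_eq_pair_of_isIrred hU (hl.1 C hC)
    obtain rfl : a = c := by simpa [ha1] using haC
    exact hC

lemma nodup_of_isMinimalFactorization {l : List (redPow H)} {X : redPow H}
    (hl : IsMinimalFactorization l X) : l.Nodup := by
  by_contra hnd
  refine hl.2 l.dedup (lt_of_le_of_ne (Multiset.coe_le.2 (List.dedup_sublist l).subperm)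
    fun h => hnd ((Multiset.coe_eq_coe.1 h).nodup_iff.1 (List.nodup_dedup l))) ?_
  rw [← hl.1.2]
  ext x
  simp only [mem_coe_list_prod hU, List.mem_dedup]

lemma isMinimalFactorization_of_nodup {l : List (redPow H)} {X : redPow H}
    (hl : IsFactorization l X) (hnd : l.Nodup) : IsMinimalFactorization l X := by
  refine ⟨hl, fun l' hl' hprod => hl'.ne ?_⟩
  have hfac : IsFactorization l' X :=
    ⟨fun B hB => hl.1 B (by simpa using Multiset.mem_of_le hl'.le (Multiset.mem_coe.2 hB)), hprod⟩
  exact Multiset.coe_eq_coe.2 (List.perm_of_nodup_nodup_toFinset_eq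
    (Multiset.nodup_of_le hl'.le hnd) hnd (by rw [toFinset_eq_of_isFactorization hU hfac,
      toFinset_eq_of_isFactorization hU hl]))

lemma exists_isMinimalFactorization (X : redPow H) : ∃ l, IsMinimalFactorization l X := by
  let l := (((X : Finset H).erase 1).image pair).toList
  have hl : ∀ {B}, B ∈ l ↔ ∃ a, (a ≠ 1 ∧ a ∈ (X : Finset H)) ∧ pair a = B := by simp [l]
  refine ⟨l, isMinimalFactorization_of_nodup hU ⟨fun B hB => ?_, ?_⟩ (Finset.nodup_toList _)⟩
  · obtain ⟨a, ⟨ha1, -⟩, rfl⟩ := hl.1 hB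
    exact isIrred_pair ha1
  refine Subtype.ext (Finset.ext fun x => ?_)
  rw [mem_coe_list_prod hU]
  constructor
  · rintro (rfl | ⟨B, hB, hx⟩)
    · exact one_mem_coe X
    obtain ⟨a, ⟨-, haX⟩, rfl⟩ := hl.1 hB
    rcases Finset.mem_insert.1 hx with rfl | hx
    · exact one_mem_coe X
    · exact Finset.mem_singleton.1 hx ▸ haX
  · intro hx
    by_cases hx1 : x = 1
    · exact Or.inl hx1
    · exact Or.inr ⟨pair x, hl.2 ⟨x, ⟨hx1, hx⟩, rfl⟩, by simp⟩

lemma isUmF_of_coe_mul_eq_union : IsUmF (redPow H) :=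
  ⟨fun X _ => exists_isMinimalFactorization hU X, fun _ _ _ hl hl' =>
    List.perm_of_nodup_nodup_toFinset_eq (nodup_of_isMinimalFactorization hU hl)
      (nodup_of_isMinimalFactorization hU hl')
      (by rw [toFinset_eq_of_isFactorization hU hl.1, toFinset_eq_of_isFactorization hU hl'.1])⟩

end UnionMul

lemma coe_mul_eq_union_of_forall_mul_mem (h : ∀ a b : H, a * b ∈ ({1, a, b} : Set H))
    (X Y : redPow H) : ((X * Y : redPow H) : Finset H) = (X : Finset H) ∪ (Y : Finset H) := by
  ext z
  simp only [Submonoid.coe_mul, Finset.mem_mul, Finset.mem_union]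
  constructor
  · rintro ⟨x, hx, y, hy, rfl⟩
    rcases h x y with hxy | hxy | hxy <;> rw [hxy]
    exacts [Or.inl (one_mem_coe X), Or.inl hx, Or.inr hy]
  · rintro (hz | hz)
    exacts [⟨z, hz, 1, one_mem_coe Y, mul_one z⟩, ⟨1, one_mem_coe X, z, hz, one_mul z⟩]

theorem isUmF_iff_forall_mul_mem : IsUmF (redPow H) ↔ ∀ a b : H, a * b ∈ ({1, a, b} : Set H) :=
  ⟨mul_mem_of_isUmF, fun h => isUmF_of_coe_mul_eq_union (coe_mul_eq_union_of_forall_mul_mem h)⟩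

end redPow

theorem stmt_19 {H : Type*} [CommMonoid H] [DecidableEq H] :
    IsUmF (redPow H) ↔
      (∀ x y : H, ¬ IsUnit x → ¬ IsUnit y → ¬ IsUnit (x * y)) ∧
      (∀ x y : H, ¬ IsUnit x → ¬ IsUnit y → x * y = x ∨ x * y = y) ∧
      Set.encard {u : H | IsUnit u} ≤ 2 ∧
      (∀ u y : H, IsUnit u → ¬ IsUnit y → u * y = y) :=
  redPow.isUmF_iff_forall_mul_mem.trans forall_mul_mem_iff
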